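/- Suppose the curve evolves by the Fukumoto–Miyazaki flow ∂γ/∂t = k B + W((1/2)k² T + (∂k/∂s) N + kτ B) for a constant W ∈ ℝ (i.e. ν = (W/2)k², μ = W ∂k/∂s, α = k + Wkτ), and suppose ∂M/∂t = iR M + ω T for a real-valued function R(s,t), where ω = ⟨∂M/∂t, T⟩. Then there exists a real-valued function A of t alone such that the Hasimoto wave function satisfies the Hirota equation i ∂ψ/∂t + ∂²ψ/∂s² + (1/2)|ψ|² ψ − iW(∂³ψ/∂s³ + (3/2)|ψ|² ∂ψ/∂s) = A(t) ψ. -/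

import Mathlib

open scoped BigOperators RealInnerProductSpace
open Complex

noncomputable section

abbrev E3 : Type := EuclideanSpace ℝ (Fin 3)

/-- Partial derivative with respect to the first (arclength) variable. -/
noncomputable def dS {V : Type} [NormedAddCommGroup V] [NormedSpace ℝ V]
    (F : ℝ → ℝ → V) : ℝ → ℝ → V := fun s t => deriv (fun x => F x t) s

/-- Partial derivative with respect to the second (time) variable. -/
noncomputable def dT {V : Type} [NormedAddCommGroup V] [NormedSpace ℝ V]
    (F : ℝ → ℝ → V) : ℝ → ℝ → V := fun s t => deriv (fun x => F s x) t

/-- Complexification of a real vector in `ℝ³`. -/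
noncomputable def cvec (v : E3) : Fin 3 → ℂ := fun i => (v i : ℂ)

/-- Bilinear extension of the real inner product to `ℂ³`. -/
noncomputable def cip (u v : Fin 3 → ℂ) : ℂ := ∑ i, u i * v i

/-- The phase `θ(s,t) = ∫₀^s τ(s',t) ds'`. -/
noncomputable def θf (τ : ℝ → ℝ → ℝ) : ℝ → ℝ → ℝ :=
  fun s t => ∫ x in (0:ℝ)..s, τ x t

/-- The Hasimoto wave function `ψ = k e^{iθ}`. -/
noncomputable def ψf (k τ : ℝ → ℝ → ℝ) : ℝ → ℝ → ℂ :=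
  fun s t => (k s t : ℂ) * Complex.exp (Complex.I * (θf τ s t : ℂ))

/-- The complexified frame vector `M = (N + iB) e^{iθ}`. -/
noncomputable def Mf (N B : ℝ → ℝ → E3) (τ : ℝ → ℝ → ℝ) : ℝ → ℝ → (Fin 3 → ℂ) :=
  fun s t => Complex.exp (Complex.I * (θf τ s t : ℂ)) •
    (cvec (N s t) + Complex.I • cvec (B s t))

/-- `ω = ⟨∂M/∂t, T⟩` (bilinear inner product). -/
noncomputable def ωf (T N B : ℝ → ℝ → E3) (τ : ℝ → ℝ → ℝ) : ℝ → ℝ → ℂ :=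
  fun s t => cip (dT (Mf N B τ) s t) (cvec (T s t))


section Aux

variable {V : Type} [NormedAddCommGroup V] [NormedSpace ℝ V] {F : ℝ → ℝ → V}

theorem contDiff_slice1 (h : ContDiff ℝ (⊤ : ℕ∞) (Function.uncurry F)) (t : ℝ) :
    ContDiff ℝ (⊤ : ℕ∞) (fun x => F x t) :=
  h.comp (contDiff_id.prodMk contDiff_const)

theorem contDiff_slice2 (h : ContDiff ℝ (⊤ : ℕ∞) (Function.uncurry F)) (s : ℝ) :
    ContDiff ℝ (⊤ : ℕ∞) (fun x => F s x) :=
  h.comp (contDiff_const.prodMk contDiff_id)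

theorem hasDerivAt_dS (h : ContDiff ℝ (⊤ : ℕ∞) (Function.uncurry F)) (s t : ℝ) :
    HasDerivAt (fun x => F x t) (dS F s t) s :=
  ((contDiff_slice1 h t).differentiable (by simp) s).hasDerivAt

theorem hasDerivAt_dT (h : ContDiff ℝ (⊤ : ℕ∞) (Function.uncurry F)) (s t : ℝ) :
    HasDerivAt (fun x => F s x) (dT F s t) t :=
  ((contDiff_slice2 h s).differentiable (by simp) t).hasDerivAt

theorem contDiff_dS (h : ContDiff ℝ (⊤ : ℕ∞) (Function.uncurry F)) :
    ContDiff ℝ (⊤ : ℕ∞) (Function.uncurry (dS F)) := by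
  have h1 : ContDiff ℝ (⊤ : ℕ∞) (Function.uncurry (fun (p : ℝ × ℝ) (x : ℝ) => F x p.2)) := by
    exact h.comp ((contDiff_snd).prodMk (contDiff_snd.comp contDiff_fst))
  have h2 : ContDiff ℝ (⊤ : ℕ∞) (fun p : ℝ × ℝ => fderiv ℝ (fun x => F x p.2) p.1) :=
    h1.fderiv contDiff_fst ((by simp))
  have h3 : ContDiff ℝ (⊤ : ℕ∞) (fun p : ℝ × ℝ => fderiv ℝ (fun x => F x p.2) p.1 1) :=
    h2.clm_apply contDiff_const
  exact h3

theorem contDiff_dT (h : ContDiff ℝ (⊤ : ℕ∞) (Function.uncurry F)) :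
    ContDiff ℝ (⊤ : ℕ∞) (Function.uncurry (dT F)) := by
  have h1 : ContDiff ℝ (⊤ : ℕ∞) (Function.uncurry (fun (p : ℝ × ℝ) (x : ℝ) => F p.1 x)) := by
    exact h.comp ((contDiff_fst.comp contDiff_fst).prodMk contDiff_snd)
  have h2 : ContDiff ℝ (⊤ : ℕ∞) (fun p : ℝ × ℝ => fderiv ℝ (fun x => F p.1 x) p.2) :=
    h1.fderiv contDiff_snd ((by simp))
  have h3 : ContDiff ℝ (⊤ : ℕ∞) (fun p : ℝ × ℝ => fderiv ℝ (fun x => F p.1 x) p.2 1) :=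
    h2.clm_apply contDiff_const
  exact h3

theorem dS_congr {G : ℝ → ℝ → V} (h : ∀ s t, F s t = G s t) (s t : ℝ) :
    dS F s t = dS G s t := by
  have : F = G := funext fun a => funext fun b => h a b
  rw [this]

theorem dT_congr {G : ℝ → ℝ → V} (h : ∀ s t, F s t = G s t) (s t : ℝ) :
    dT F s t = dT G s t := by
  have : F = G := funext fun a => funext fun b => h a b
  rw [this]

end Aux

section Theta

/-- `∂θ/∂t` as an explicit integral. -/
noncomputable def θtf (τ : ℝ → ℝ → ℝ) : ℝ → ℝ → ℝ :=
  fun s t => ∫ x in (0:ℝ)..s, dT τ x t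

variable {τ : ℝ → ℝ → ℝ}

theorem theta_hasDerivAt_s (hτ : ContDiff ℝ (⊤ : ℕ∞) (Function.uncurry τ)) (s t : ℝ) :
    HasDerivAt (fun x => θf τ x t) (τ s t) s :=
  ((contDiff_slice1 hτ t).continuous.integral_hasStrictDerivAt 0 s).hasDerivAt

theorem thetat_hasDerivAt_s (hτ : ContDiff ℝ (⊤ : ℕ∞) (Function.uncurry τ)) (s t : ℝ) :
    HasDerivAt (fun x => θtf τ x t) (dT τ s t) s :=
  ((contDiff_slice1 (contDiff_dT hτ) t).continuous.integral_hasStrictDerivAt 0 s).hasDerivAt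

theorem theta_hasDerivAt_t (hτ : ContDiff ℝ (⊤ : ℕ∞) (Function.uncurry τ)) (s t : ℝ) :
    HasDerivAt (fun x => θf τ s x) (θtf τ s t) t := by
  have hcont : Continuous (Function.uncurry (dT τ)) := (contDiff_dT hτ).continuous
  have hK : IsCompact ((Set.uIcc (0:ℝ) s) ×ˢ (Set.Icc (t-1) (t+1))) :=
    isCompact_uIcc.prod isCompact_Icc
  obtain ⟨C, hC⟩ := hK.exists_bound_of_continuousOn hcont.continuousOn
  have main := intervalIntegral.hasDerivAt_integral_of_dominated_loc_of_deriv_le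
    (F := fun x a => τ a x) (F' := fun x a => dT τ a x) (x₀ := t) (a := (0:ℝ)) (b := s)
    (bound := fun _ => C) (s := Metric.ball t 1) (μ := MeasureTheory.volume) (Metric.ball_mem_nhds t one_pos)
    (Filter.Eventually.of_forall fun x =>
      ((contDiff_slice1 hτ x).continuous.aestronglyMeasurable))
    (((contDiff_slice1 hτ t).continuous).intervalIntegrable 0 s)
    ((contDiff_slice1 (contDiff_dT hτ) t).continuous.aestronglyMeasurable)
    ?_ (intervalIntegrable_const) ?_
  · exact main.2
  · refine Filter.Eventually.of_forall fun a ha x hx => ?_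
    have : (a, x) ∈ (Set.uIcc (0:ℝ) s) ×ˢ (Set.Icc (t-1) (t+1)) := by
      constructor
      · exact Set.uIoc_subset_uIcc ha
      · have := Metric.mem_ball.mp hx
        have h1 : |x - t| < 1 := by simpa [Real.dist_eq] using this
        have := abs_lt.mp h1
        constructor <;> simp <;> linarith [this.1, this.2]
    simpa using hC _ this
  · exact Filter.Eventually.of_forall fun a _ x _ => hasDerivAt_dT hτ a x

theorem dT_theta (hτ : ContDiff ℝ (⊤ : ℕ∞) (Function.uncurry τ)) (s t : ℝ) : dT (θf τ) s t = θtf τ s t :=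
  (theta_hasDerivAt_t hτ s t).deriv

end Theta

section Cip

theorem cip_cvec_cvec (u v : E3) : cip (cvec u) (cvec v) = ((⟪u, v⟫ : ℝ) : ℂ) := by
  simp [cip, cvec, PiLp.inner_apply, RCLike.inner_apply]
  exact Finset.sum_congr rfl (fun i _ => mul_comm _ _)

end Cip

theorem inner_dT_of_const {X Y : ℝ → ℝ → E3} (hX : ContDiff ℝ (⊤ : ℕ∞) (Function.uncurry X))
    (hY : ContDiff ℝ (⊤ : ℕ∞) (Function.uncurry Y)) {c : ℝ} (hc : ∀ s t, ⟪X s t, Y s t⟫ = c)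
    (s t : ℝ) : ⟪X s t, dT Y s t⟫ + ⟪dT X s t, Y s t⟫ = 0 := by
  have h := (hasDerivAt_dT hX s t).inner ℝ (hasDerivAt_dT hY s t)
  have h0 : HasDerivAt (fun u => (⟪X s u, Y s u⟫ : ℝ)) 0 t := by
    have e : (fun u => (⟪X s u, Y s u⟫ : ℝ)) = fun _ => c := funext fun u => hc s u
    rw [e]; exact hasDerivAt_const t c
  exact h.unique h0

theorem inner_dS_of_const {X Y : ℝ → ℝ → E3} (hX : ContDiff ℝ (⊤ : ℕ∞) (Function.uncurry X))
    (hY : ContDiff ℝ (⊤ : ℕ∞) (Function.uncurry Y)) {c : ℝ} (hc : ∀ s t, ⟪X s t, Y s t⟫ = c)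
    (s t : ℝ) : ⟪X s t, dS Y s t⟫ + ⟪dS X s t, Y s t⟫ = 0 := by
  have h := (hasDerivAt_dS hX s t).inner ℝ (hasDerivAt_dS hY s t)
  have h0 : HasDerivAt (fun u => (⟪X u t, Y u t⟫ : ℝ)) 0 s := by
    have e : (fun u => (⟪X u t, Y u t⟫ : ℝ)) = fun _ => c := funext fun u => hc u t
    rw [e]; exact hasDerivAt_const s c
  exact h.unique h0

noncomputable def cvL : E3 →L[ℝ] (Fin 3 → ℂ) :=
  ContinuousLinearMap.pi fun i => Complex.ofRealCLM.comp (EuclideanSpace.proj i)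

theorem cvL_apply (v : E3) : cvL v = cvec v := rfl

theorem hasDerivAt_cvec {F : ℝ → E3} {v : E3} {x : ℝ} (h : HasDerivAt F v x) :
    HasDerivAt (fun u => cvec (F u)) (cvec v) x := by
  have h2 := cvL.hasFDerivAt.comp_hasDerivAt x h
  exact h2

theorem cip_add_left (u v w : Fin 3 → ℂ) : cip (u + v) w = cip u w + cip v w := by
  simp [cip, add_mul, Finset.sum_add_distrib]

theorem cip_smul_left (a : ℂ) (u w : Fin 3 → ℂ) : cip (a • u) w = a * cip u w := by
  simp [cip, Finset.mul_sum, mul_assoc]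

theorem stmt12
    (γ T N B : ℝ → ℝ → E3) (k τ : ℝ → ℝ → ℝ)
    (hγsm : ContDiff ℝ (⊤ : ℕ∞) (Function.uncurry γ))
    (hTsm : ContDiff ℝ (⊤ : ℕ∞) (Function.uncurry T))
    (hNsm : ContDiff ℝ (⊤ : ℕ∞) (Function.uncurry N))
    (hBsm : ContDiff ℝ (⊤ : ℕ∞) (Function.uncurry B))
    (hksm : ContDiff ℝ (⊤ : ℕ∞) (Function.uncurry k))
    (hτsm : ContDiff ℝ (⊤ : ℕ∞) (Function.uncurry τ))
    (hkpos : ∀ s t, 0 < k s t)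
    (hTdef : ∀ s t, dS γ s t = T s t)
    (horth : ∀ s t, ⟪T s t, T s t⟫ = 1 ∧ ⟪N s t, N s t⟫ = 1 ∧
      ⟪B s t, B s t⟫ = 1 ∧ ⟪T s t, N s t⟫ = 0 ∧
      ⟪T s t, B s t⟫ = 0 ∧ ⟪N s t, B s t⟫ = 0)
    (hFS1 : ∀ s t, dS T s t = k s t • N s t)
    (hFS2 : ∀ s t, dS N s t = -(k s t) • T s t + τ s t • B s t)
    (hFS3 : ∀ s t, dS B s t = -(τ s t) • N s t)
    (ν μ α : ℝ → ℝ → ℝ)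
    (hνsm : ContDiff ℝ (⊤ : ℕ∞) (Function.uncurry ν))
    (hμsm : ContDiff ℝ (⊤ : ℕ∞) (Function.uncurry μ))
    (hαsm : ContDiff ℝ (⊤ : ℕ∞) (Function.uncurry α))
    (hkin : ∀ s t, dT γ s t = ν s t • T s t + μ s t • N s t + α s t • B s t)
    (hmixγ : ∀ s t, dS (dT γ) s t = dT (dS γ) s t)
    (hmixT : ∀ s t, dS (dT T) s t = dT (dS T) s t)
    (hmixN : ∀ s t, dS (dT N) s t = dT (dS N) s t)
    (hmixB : ∀ s t, dS (dT B) s t = dT (dS B) s t)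
    (W : ℝ)
    (hνW : ∀ s t, ν s t = W / 2 * k s t ^ 2)
    (hμW : ∀ s t, μ s t = W * dS k s t)
    (hαW : ∀ s t, α s t = k s t + W * k s t * τ s t)
    (R : ℝ → ℝ → ℝ)
    (hMt : ∀ s t, dT (Mf N B τ) s t =
      (Complex.I * (R s t : ℂ)) • Mf N B τ s t + ωf T N B τ s t • cvec (T s t))
    :
    ∃ A : ℝ → ℝ, ∀ s t,
      Complex.I * dT (ψf k τ) s t + dS (dS (ψf k τ)) s t +
        (1/2 : ℂ) * ((‖ψf k τ s t‖ : ℝ) : ℂ)^2 * ψf k τ s t -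
        Complex.I * (W : ℂ) * (dS (dS (dS (ψf k τ))) s t +
          (3/2 : ℂ) * ((‖ψf k τ s t‖ : ℝ) : ℂ)^2 * dS (ψf k τ) s t) =
      ((A t : ℝ) : ℂ) * ψf k τ s t := by
  -- notation for the exponential factor
  set E : ℝ → ℝ → ℂ := fun s t => Complex.exp (Complex.I * (θf τ s t : ℂ)) with hE
  have hk1 : ContDiff ℝ (⊤ : ℕ∞) (Function.uncurry (dS k)) := contDiff_dS hksm
  have hk2 : ContDiff ℝ (⊤ : ℕ∞) (Function.uncurry (dS (dS k))) := contDiff_dS hk1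
  have hτ1 : ContDiff ℝ (⊤ : ℕ∞) (Function.uncurry (dS τ)) := contDiff_dS hτsm
  -- derivative of the exponential factor in s
  have hEs : ∀ s t, HasDerivAt (fun x => E x t) (Complex.I * (τ s t : ℂ) * E s t) s := by
    intro s t
    have h1 : HasDerivAt (fun x => Complex.I * (θf τ x t : ℂ)) (Complex.I * (τ s t : ℂ)) s := by
      simpa using ((theta_hasDerivAt_s hτsm s t).ofReal_comp).const_mul Complex.I
    simpa [hE, mul_comm] using h1.cexp
  -- derivative of the exponential factor in t
  have hEt : ∀ s t, HasDerivAt (fun x => E s x) (Complex.I * (θtf τ s t : ℂ) * E s t) t := by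
    intro s t
    have h1 : HasDerivAt (fun x => Complex.I * (θf τ s x : ℂ)) (Complex.I * (θtf τ s t : ℂ)) t := by
      simpa using ((theta_hasDerivAt_t hτsm s t).ofReal_comp).const_mul Complex.I
    simpa [hE, mul_comm] using h1.cexp
  -- ∂ψ/∂s
  have hψs : ∀ s t, dS (ψf k τ) s t =
      (((dS k s t : ℝ) : ℂ) + Complex.I * (k s t : ℂ) * (τ s t : ℂ)) * E s t := by
    intro s t
    have h := ((hasDerivAt_dS hksm s t).ofReal_comp).mul (hEs s t)
    simp only [Pi.mul_def, Pi.add_def, Pi.sub_def, Pi.pow_def] at h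
    have h2 := h.deriv
    calc dS (ψf k τ) s t = deriv (fun y => (k y t : ℂ) * E y t) s := rfl
      _ = _ := by rw [h2]; ring
  -- ∂²ψ/∂s²
  have hψss : ∀ s t, dS (dS (ψf k τ)) s t =
      (((dS (dS k) s t : ℝ) : ℂ) - ((k s t : ℝ) : ℂ) * (((τ s t : ℝ) : ℂ) * ((τ s t : ℝ) : ℂ))
        + Complex.I * (2 * ((dS k s t : ℝ) : ℂ) * ((τ s t : ℝ) : ℂ)
            + ((k s t : ℝ) : ℂ) * ((dS τ s t : ℝ) : ℂ))) * E s t := by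
    intro s t
    have h := (((hasDerivAt_dS hk1 s t).ofReal_comp).add
      ((((hasDerivAt_dS hksm s t).ofReal_comp).const_mul Complex.I).mul
        ((hasDerivAt_dS hτsm s t).ofReal_comp))).mul (hEs s t)
    simp only [Pi.mul_def, Pi.add_def, Pi.sub_def, Pi.pow_def] at h
    have h2 := h.deriv
    calc dS (dS (ψf k τ)) s t
        = dS (fun s t => (((dS k s t : ℝ) : ℂ)
            + Complex.I * ((k s t : ℝ) : ℂ) * ((τ s t : ℝ) : ℂ)) * E s t) s t :=
          dS_congr hψs s t
      _ = _ := by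
          rw [show dS (fun s t => (((dS k s t : ℝ) : ℂ)
            + Complex.I * ((k s t : ℝ) : ℂ) * ((τ s t : ℝ) : ℂ)) * E s t) s t
            = deriv (fun x => (((dS k x t : ℝ) : ℂ)
            + Complex.I * ((k x t : ℝ) : ℂ) * ((τ x t : ℝ) : ℂ)) * E x t) s from rfl, h2]
          linear_combination (((k s t : ℝ) : ℂ) * ((τ s t : ℝ) : ℂ)^2 * E s t) * Complex.I_sq
  -- ∂³ψ/∂s³
  have hψsss : ∀ s t, dS (dS (dS (ψf k τ))) s t =
      (((dS (dS (dS k)) s t : ℝ) : ℂ)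
        - 3 * ((dS k s t : ℝ) : ℂ) * ((τ s t : ℝ) : ℂ)^2
        - 3 * ((k s t : ℝ) : ℂ) * ((τ s t : ℝ) : ℂ) * ((dS τ s t : ℝ) : ℂ)
        + Complex.I * (3 * ((dS (dS k) s t : ℝ) : ℂ) * ((τ s t : ℝ) : ℂ)
            + 3 * ((dS k s t : ℝ) : ℂ) * ((dS τ s t : ℝ) : ℂ)
            + ((k s t : ℝ) : ℂ) * ((dS (dS τ) s t : ℝ) : ℂ)
            - ((k s t : ℝ) : ℂ) * ((τ s t : ℝ) : ℂ)^3)) * E s t := by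
    intro s t
    have a := (hasDerivAt_dS hk2 s t).ofReal_comp
    have b := ((hasDerivAt_dS hksm s t).ofReal_comp).mul
      (((hasDerivAt_dS hτsm s t).ofReal_comp).mul ((hasDerivAt_dS hτsm s t).ofReal_comp))
    have c := (((hasDerivAt_dS hk1 s t).ofReal_comp).const_mul (2:ℂ)).mul
      ((hasDerivAt_dS hτsm s t).ofReal_comp)
    have d := ((hasDerivAt_dS hksm s t).ofReal_comp).mul
      ((hasDerivAt_dS hτ1 s t).ofReal_comp)
    have h := (((a.sub b).add ((c.add d).const_mul Complex.I)).mul (hEs s t))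
    simp only [Pi.mul_def, Pi.add_def, Pi.sub_def, Pi.pow_def] at h
    have h2 := h.deriv
    calc dS (dS (dS (ψf k τ))) s t
        = dS (fun s t => (((dS (dS k) s t : ℝ) : ℂ)
            - ((k s t : ℝ) : ℂ) * (((τ s t : ℝ) : ℂ) * ((τ s t : ℝ) : ℂ))
            + Complex.I * (2 * ((dS k s t : ℝ) : ℂ) * ((τ s t : ℝ) : ℂ)
                + ((k s t : ℝ) : ℂ) * ((dS τ s t : ℝ) : ℂ))) * E s t) s t :=
          dS_congr hψss s t
      _ = _ := by
          rw [show dS (fun s t => (((dS (dS k) s t : ℝ) : ℂ)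
            - ((k s t : ℝ) : ℂ) * (((τ s t : ℝ) : ℂ) * ((τ s t : ℝ) : ℂ))
            + Complex.I * (2 * ((dS k s t : ℝ) : ℂ) * ((τ s t : ℝ) : ℂ)
                + ((k s t : ℝ) : ℂ) * ((dS τ s t : ℝ) : ℂ))) * E s t) s t
            = deriv (fun x => (((dS (dS k) x t : ℝ) : ℂ)
            - ((k x t : ℝ) : ℂ) * (((τ x t : ℝ) : ℂ) * ((τ x t : ℝ) : ℂ))
            + Complex.I * (2 * ((dS k x t : ℝ) : ℂ) * ((τ x t : ℝ) : ℂ)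
                + ((k x t : ℝ) : ℂ) * ((dS τ x t : ℝ) : ℂ))) * E x t) s from rfl, h2]
          linear_combination ((2 * ((dS k s t : ℝ) : ℂ) * ((τ s t : ℝ) : ℂ)^2
            + ((k s t : ℝ) : ℂ) * ((τ s t : ℝ) : ℂ) * ((dS τ s t : ℝ) : ℂ)) * E s t) * Complex.I_sq
  -- ∂ψ/∂t
  have hψt : ∀ s t, dT (ψf k τ) s t =
      (((dT k s t : ℝ) : ℂ) + Complex.I * ((k s t : ℝ) : ℂ) * ((θtf τ s t : ℝ) : ℂ)) * E s t := by
    intro s t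
    have h := ((hasDerivAt_dT hksm s t).ofReal_comp).mul (hEt s t)
    simp only [Pi.mul_def, Pi.add_def, Pi.sub_def, Pi.pow_def] at h
    have h2 := h.deriv
    calc dT (ψf k τ) s t = deriv (fun y => ((k s y : ℝ) : ℂ) * E s y) t := rfl
      _ = _ := by rw [h2]; ring
  -- |ψ|² = k²
  have habs : ∀ s t, (((‖ψf k τ s t‖ : ℝ) : ℂ))^2 = ((k s t : ℝ) : ℂ)^2 := by
    intro s t
    have h1 : ‖ψf k τ s t‖ = k s t := by
      simp [ψf, norm_mul, Complex.norm_exp, Complex.norm_real, abs_of_pos (hkpos s t),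
        Complex.mul_re, Complex.I_re, Complex.I_im]
    rw [h1]
  -- the tangent evolution  T_t = G • N + H • B
  set G : ℝ → ℝ → ℝ := fun p q => W/2 * k p q^3 + W * dS (dS k) p q
      - k p q * τ p q - W * k p q * τ p q^2 with hGdef
  set H : ℝ → ℝ → ℝ := fun p q => dS k p q + 2*W*dS k p q*τ p q + W*k p q*dS τ p q with hHdef
  have hTt : ∀ s t, dT T s t = G s t • N s t + H s t • B s t := by
    intro s t
    have hT' := hasDerivAt_dS hTsm s t; rw [hFS1 s t] at hT'
    have hN' := hasDerivAt_dS hNsm s t; rw [hFS2 s t] at hN'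
    have hB' := hasDerivAt_dS hBsm s t; rw [hFS3 s t] at hB'
    have eν : (fun x => ν x t) = fun x => W / 2 * k x t ^ 2 := funext fun x => hνW x t
    have hν' := ((hasDerivAt_dS hksm s t).pow 2).const_mul (W/2); simp only [Pi.pow_def] at hν'; rw [← eν] at hν'
    have eμ : (fun x => μ x t) = fun x => W * dS k x t := funext fun x => hμW x t
    have hμ' := (hasDerivAt_dS hk1 s t).const_mul W; rw [← eμ] at hμ'
    have eα : (fun x => α x t) = fun x => k x t + W * k x t * τ x t :=
      funext fun x => hαW x t
    have hα' := (hasDerivAt_dS hksm s t).add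
      (((hasDerivAt_dS hksm s t).const_mul W).mul (hasDerivAt_dS hτsm s t))
    simp only [Pi.mul_def, Pi.add_def] at hα'
    rw [← eα] at hα'
    have total := ((hν'.smul hT').add (hμ'.smul hN')).add (hα'.smul hB')
    calc dT T s t = dT (dS γ) s t := (dT_congr hTdef s t).symm
      _ = dS (dT γ) s t := (hmixγ s t).symm
      _ = dS (fun p q => ν p q • T p q + μ p q • N p q + α p q • B p q) s t := dS_congr hkin s t
      _ = _ := total.deriv
      _ = G s t • N s t + H s t • B s t := by
          rw [hνW s t, hμW s t, hαW s t, hGdef, hHdef]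
          match_scalars <;> ring
  have hMf : ∀ s t, Mf N B τ s t = E s t • (cvec (N s t) + Complex.I • cvec (B s t)) :=
    fun s t => rfl
  -- inner product facts with the time derivatives of the frame
  have hTtN : ∀ s t, (⟪dT T s t, N s t⟫ : ℝ) = G s t := by
    intro s t
    obtain ⟨hTT, hNN, hBB, hTN, hTB, hNB⟩ := horth s t
    rw [hTt s t]
    have hBN : (⟪B s t, N s t⟫ : ℝ) = 0 := by rw [real_inner_comm]; exact hNB
    simp only [inner_add_left, real_inner_smul_left]
    linear_combination G s t * hNN + H s t * hBN
  have hTtB : ∀ s t, (⟪dT T s t, B s t⟫ : ℝ) = H s t := by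
    intro s t
    obtain ⟨hTT, hNN, hBB, hTN, hTB, hNB⟩ := horth s t
    rw [hTt s t]
    simp only [inner_add_left, real_inner_smul_left]
    linear_combination G s t * hNB + H s t * hBB
  have hTtT : ∀ s t, (⟪dT T s t, T s t⟫ : ℝ) = 0 := by
    intro s t
    obtain ⟨hTT, hNN, hBB, hTN, hTB, hNB⟩ := horth s t
    rw [hTt s t]
    have hNT : (⟪N s t, T s t⟫ : ℝ) = 0 := by rw [real_inner_comm]; exact hTN
    have hBT : (⟪B s t, T s t⟫ : ℝ) = 0 := by rw [real_inner_comm]; exact hTB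
    simp only [inner_add_left, real_inner_smul_left]
    linear_combination G s t * hNT + H s t * hBT
  have hNtT : ∀ s t, (⟪dT N s t, T s t⟫ : ℝ) = -G s t := by
    intro s t
    have h := inner_dT_of_const hTsm hNsm (fun p q => (horth p q).2.2.2.1) s t
    have h2 := hTtN s t
    rw [real_inner_comm] at h
    linarith [real_inner_comm (dT T s t) (N s t)]
  have hBtT : ∀ s t, (⟪dT B s t, T s t⟫ : ℝ) = -H s t := by
    intro s t
    have h := inner_dT_of_const hTsm hBsm (fun p q => (horth p q).2.2.2.2.1) s t
    have h2 := hTtB s t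
    rw [real_inner_comm] at h
    linarith [real_inner_comm (dT T s t) (B s t)]
  have hNtN : ∀ s t, (⟪dT N s t, N s t⟫ : ℝ) = 0 := by
    intro s t
    have h := inner_dT_of_const hNsm hNsm (fun p q => (horth p q).2.1) s t
    rw [real_inner_comm] at h
    linarith
  have hBtB : ∀ s t, (⟪dT B s t, B s t⟫ : ℝ) = 0 := by
    intro s t
    have h := inner_dT_of_const hBsm hBsm (fun p q => (horth p q).2.2.1) s t
    rw [real_inner_comm] at h
    linarith
  -- derivative of M in time
  have hMd : ∀ s t, dT (Mf N B τ) s t =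
      E s t • (cvec (dT N s t) + Complex.I • cvec (dT B s t))
        + (Complex.I * ((θtf τ s t : ℝ) : ℂ) * E s t) •
            (cvec (N s t) + Complex.I • cvec (B s t)) := by
    intro s t
    have hvec : HasDerivAt (fun u => cvec (N s u) + Complex.I • cvec (B s u))
        (cvec (dT N s t) + Complex.I • cvec (dT B s t)) t :=
      (hasDerivAt_cvec (hasDerivAt_dT hNsm s t)).add
        ((hasDerivAt_cvec (hasDerivAt_dT hBsm s t)).const_smul Complex.I)
    have h := (hEt s t).smul hvec
    have h2 := h.deriv
    calc dT (Mf N B τ) s t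
        = deriv (fun u => E s u • (cvec (N s u) + Complex.I • cvec (B s u))) t := rfl
      _ = _ := by exact h2
  -- the coefficient ω
  have hω : ∀ s t, ωf T N B τ s t = -(((G s t : ℝ) : ℂ) + Complex.I * ((H s t : ℝ) : ℂ)) * E s t := by
    intro s t
    obtain ⟨hTT, hNN, hBB, hTN, hTB, hNB⟩ := horth s t
    have hNT : (⟪N s t, T s t⟫ : ℝ) = 0 := by rw [real_inner_comm]; exact hTN
    have hBT : (⟪B s t, T s t⟫ : ℝ) = 0 := by rw [real_inner_comm]; exact hTB
    have e1 : ωf T N B τ s t = cip (dT (Mf N B τ) s t) (cvec (T s t)) := rfl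
    rw [e1, hMd s t, cip_add_left, cip_smul_left, cip_smul_left, cip_add_left,
      cip_add_left, cip_smul_left, cip_smul_left, cip_cvec_cvec, cip_cvec_cvec,
      cip_cvec_cvec, cip_cvec_cvec, hNtT s t, hBtT s t, hNT, hBT]
    push_cast
    ring
  -- extraction of N_t and B_t from the M equation
  have hNtBt : ∀ s t, dT N s t = (θtf τ s t - R s t) • B s t - G s t • T s t ∧
      dT B s t = (R s t - θtf τ s t) • N s t - H s t • T s t := by
    intro s t
    have hEne : E s t ≠ 0 := Complex.exp_ne_zero _
    have heq := hMt s t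
    rw [hMd s t, hω s t, hMf s t] at heq
    have key : ∀ i : Fin 3, (((dT N s t) i : ℝ) : ℂ) + Complex.I * (((dT B s t) i : ℝ) : ℂ) =
        (Complex.I * ((R s t : ℝ) : ℂ) - Complex.I * ((θtf τ s t : ℝ) : ℂ)) *
            (((N s t i : ℝ) : ℂ) + Complex.I * ((B s t i : ℝ) : ℂ))
          - (((G s t : ℝ) : ℂ) + Complex.I * ((H s t : ℝ) : ℂ)) * ((T s t i : ℝ) : ℂ) := by
      intro i
      have h1 := congrFun heq i
      simp only [Pi.add_apply, Pi.smul_apply, smul_eq_mul, cvec] at h1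
      apply mul_left_cancel₀ hEne
      linear_combination h1
    constructor
    · ext i
      have h2 := congrArg Complex.re (key i)
      simp only [Complex.add_re, Complex.sub_re, Complex.mul_re, Complex.mul_im,
        Complex.add_im, Complex.sub_im, Complex.I_re, Complex.I_im, Complex.ofReal_re,
        Complex.ofReal_im] at h2
      simp only [PiLp.smul_apply, PiLp.sub_apply, smul_eq_mul]
      linarith [h2]
    · ext i
      have h2 := congrArg Complex.im (key i)
      simp only [Complex.add_re, Complex.sub_re, Complex.mul_re, Complex.mul_im,
        Complex.add_im, Complex.sub_im, Complex.I_re, Complex.I_im, Complex.ofReal_re,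
        Complex.ofReal_im] at h2
      simp only [PiLp.smul_apply, PiLp.sub_apply, smul_eq_mul]
      linarith [h2]
  have hNt : ∀ s t, dT N s t = (θtf τ s t - R s t) • B s t - G s t • T s t :=
    fun s t => (hNtBt s t).1
  have hBt : ∀ s t, dT B s t = (R s t - θtf τ s t) • N s t - H s t • T s t :=
    fun s t => (hNtBt s t).2
  -- s-derivatives of G and H
  set Gs : ℝ → ℝ → ℝ := fun p q => W/2 * (3 * k p q^2 * dS k p q) + W * dS (dS (dS k)) p q
      - (dS k p q * τ p q + k p q * dS τ p q)
      - W * (dS k p q * τ p q^2 + k p q * (2 * τ p q * dS τ p q)) with hGsdef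
  set Hs : ℝ → ℝ → ℝ := fun p q => dS (dS k) p q + 2*W*(dS (dS k) p q * τ p q
      + dS k p q * dS τ p q) + W*(dS k p q * dS τ p q + k p q * dS (dS τ) p q) with hHsdef
  have hG' : ∀ s t, HasDerivAt (fun x => G x t) (Gs s t) s := by
    intro s t
    have e : (fun x => G x t) = fun x => W/2 * k x t ^ 3 + W * dS (dS k) x t
        - k x t * τ x t - W * k x t * τ x t ^ 2 := by rw [hGdef]
    have h := ((((((hasDerivAt_dS hksm s t).pow 3).const_mul (W/2)).add
        ((hasDerivAt_dS hk2 s t).const_mul W)).sub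
        ((hasDerivAt_dS hksm s t).mul (hasDerivAt_dS hτsm s t))).sub
        ((((hasDerivAt_dS hksm s t).const_mul W).mul (((hasDerivAt_dS hτsm s t)).pow 2))))
    simp only [Pi.mul_def, Pi.add_def, Pi.sub_def, Pi.pow_def] at h
    rw [← e] at h
    refine h.congr_deriv ?_
    rw [hGsdef]
    push_cast
    ring
  have hH' : ∀ s t, HasDerivAt (fun x => H x t) (Hs s t) s := by
    intro s t
    have e : (fun x => H x t) = fun x => dS k x t + 2*W*dS k x t*τ x t
        + W*k x t*dS τ x t := by rw [hHdef]
    have h := (((hasDerivAt_dS hk1 s t)).add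
        (((hasDerivAt_dS hk1 s t).const_mul (2*W)).mul (hasDerivAt_dS hτsm s t))).add
        ((((hasDerivAt_dS hksm s t).const_mul W).mul (hasDerivAt_dS hτ1 s t)))
    simp only [Pi.mul_def, Pi.add_def, Pi.sub_def, Pi.pow_def] at h
    rw [← e] at h
    refine h.congr_deriv ?_
    rw [hHsdef]
    push_cast
    ring
  -- more inner product values
  have hNtB : ∀ s t, (⟪dT N s t, B s t⟫ : ℝ) = θtf τ s t - R s t := by
    intro s t
    obtain ⟨hTT, hNN, hBB, hTN, hTB, hNB⟩ := horth s t
    rw [hNt s t]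
    simp only [inner_sub_left, real_inner_smul_left]
    rw [hBB, hTB]; ring
  have hBtN : ∀ s t, (⟪dT B s t, N s t⟫ : ℝ) = R s t - θtf τ s t := by
    intro s t
    obtain ⟨hTT, hNN, hBB, hTN, hTB, hNB⟩ := horth s t
    rw [hBt s t]
    simp only [inner_sub_left, real_inner_smul_left]
    rw [hNN, hTN]; ring
  -- expansion of the mixed derivative dT (dS N)
  have hdTdSN : ∀ s t, dT (dS N) s t = -k s t • dT T s t + -dT k s t • T s t
      + (τ s t • dT B s t + dT τ s t • B s t) := by
    intro s t
    have eN : (fun x => dS N s x) = fun x => -k s x • T s x + τ s x • B s x :=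
      funext fun x => hFS2 s x
    have hd := (((hasDerivAt_dT hksm s t).neg).smul (hasDerivAt_dT hTsm s t)).add
      ((hasDerivAt_dT hτsm s t).smul (hasDerivAt_dT hBsm s t))
    calc dT (dS N) s t = deriv (fun x => dS N s x) t := rfl
      _ = _ := by rw [eN]; exact hd.deriv
  have hdTdSB : ∀ s t, dT (dS B) s t = -τ s t • dT N s t + -dT τ s t • N s t := by
    intro s t
    have eB : (fun x => dS B s x) = fun x => -τ s x • N s x := funext fun x => hFS3 s x
    have hd := ((hasDerivAt_dT hτsm s t).neg).smul (hasDerivAt_dT hNsm s t)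
    calc dT (dS B) s t = deriv (fun x => dS B s x) t := rfl
      _ = _ := by rw [eB]; exact hd.deriv
  -- ∂k/∂t
  have hkt : ∀ s t, dT k s t = Gs s t - τ s t * H s t := by
    intro s t
    obtain ⟨hTT, hNN, hBB, hTN, hTB, hNB⟩ := horth s t
    have hBT : (⟪B s t, T s t⟫ : ℝ) = 0 := by rw [real_inner_comm]; exact hTB
    have sNT := (hasDerivAt_dS (contDiff_dT hNsm) s t).inner ℝ (hasDerivAt_dS hTsm s t)
    have e : (fun x => (⟪dT N x t, T x t⟫ : ℝ)) = fun x => -G x t := by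
      funext x
      obtain ⟨hTT', hNN', hBB', hTN', hTB', hNB'⟩ := horth x t
      have hBT' : (⟪B x t, T x t⟫ : ℝ) = 0 := by rw [real_inner_comm]; exact hTB'
      rw [hNt x t]
      simp only [inner_sub_left, real_inner_smul_left]
      rw [hTT', hBT']; ring
    rw [e] at sNT
    have h5 := sNT.unique (hG' s t).neg
    have h6 : (⟪dT N s t, dS T s t⟫ : ℝ) = 0 := by
      rw [hFS1 s t, real_inner_smul_right, hNtN s t]; ring
    have h7 : (⟪dT (dS N) s t, T s t⟫ : ℝ) = -dT k s t - τ s t * H s t := by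
      rw [hdTdSN s t]
      simp only [inner_add_left, real_inner_smul_left]
      rw [hTtT s t, hTT, hBtT s t, hBT]; ring
    rw [h6, hmixN s t, h7] at h5
    linarith
  -- k·θt
  have hkθ : ∀ s t, k s t * θtf τ s t = k s t * R s t + Hs s t + τ s t * G s t := by
    intro s t
    obtain ⟨hTT, hNN, hBB, hTN, hTB, hNB⟩ := horth s t
    have hNT : (⟪N s t, T s t⟫ : ℝ) = 0 := by rw [real_inner_comm]; exact hTN
    have sBT := (hasDerivAt_dS (contDiff_dT hBsm) s t).inner ℝ (hasDerivAt_dS hTsm s t)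
    have e : (fun x => (⟪dT B x t, T x t⟫ : ℝ)) = fun x => -H x t := by
      funext x
      obtain ⟨hTT', hNN', hBB', hTN', hTB', hNB'⟩ := horth x t
      have hNT' : (⟪N x t, T x t⟫ : ℝ) = 0 := by rw [real_inner_comm]; exact hTN'
      rw [hBt x t]
      simp only [inner_sub_left, real_inner_smul_left]
      rw [hTT', hNT']; ring
    rw [e] at sBT
    have h5 := sBT.unique (hH' s t).neg
    have h6 : (⟪dT B s t, dS T s t⟫ : ℝ) = k s t * (R s t - θtf τ s t) := by
      rw [hFS1 s t, real_inner_smul_right, hBtN s t]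
    have h7 : (⟪dT (dS B) s t, T s t⟫ : ℝ) = τ s t * G s t := by
      rw [hdTdSB s t]
      simp only [inner_add_left, real_inner_smul_left]
      rw [hNtT s t, hNT]; ring
    rw [h6, hmixB s t, h7] at h5
    linear_combination -h5
  -- s-derivative of R
  have hRs : ∀ s t, HasDerivAt (fun x => R x t) (k s t * H s t) s := by
    intro s t
    obtain ⟨hTT, hNN, hBB, hTN, hTB, hNB⟩ := horth s t
    have e : (fun x => R x t) = fun x => θtf τ x t - ⟪dT N x t, B x t⟫ := by
      funext x
      have := hNtB x t
      linarith
    have h := (thetat_hasDerivAt_s hτsm s t).sub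
      ((hasDerivAt_dS (contDiff_dT hNsm) s t).inner ℝ (hasDerivAt_dS hBsm s t))
    simp only [Pi.mul_def, Pi.add_def, Pi.sub_def, Pi.pow_def] at h
    rw [← e] at h
    refine h.congr_deriv ?_
    have h6 : (⟪dT N s t, dS B s t⟫ : ℝ) = 0 := by
      rw [hFS3 s t, real_inner_smul_right, hNtN s t]; ring
    have h7 : (⟪dS (dT N) s t, B s t⟫ : ℝ) = -(k s t * H s t) + dT τ s t := by
      rw [hmixN s t, hdTdSN s t]
      simp only [inner_add_left, real_inner_smul_left]
      rw [hTtB s t, hTB, hBtB s t, hBB]; ring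
    rw [h6, h7]; ring
  -- the conserved quantity
  have hconst : ∀ s t, k s t^2/2 + W*k s t^2*τ s t - R s t
      = k 0 t^2/2 + W*k 0 t^2*τ 0 t - R 0 t := by
    intro s t
    have hd : ∀ x, HasDerivAt (fun y => k y t^2/2 + W*k y t^2*τ y t - R y t) 0 x := by
      intro x
      have h := ((((hasDerivAt_dS hksm x t).pow 2).div_const 2).add
        ((((hasDerivAt_dS hksm x t).pow 2).const_mul W).mul (hasDerivAt_dS hτsm x t))).sub
        (hRs x t)
      simp only [Pi.mul_def, Pi.add_def, Pi.sub_def, Pi.pow_def] at h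
      refine h.congr_deriv ?_
      rw [hHdef]
      push_cast
      ring
    exact is_const_of_deriv_eq_zero
      (fun x => (hd x).differentiableAt) (fun x => (hd x).deriv) s 0
  -- conclusion
  refine ⟨fun u => k 0 u^2/2 + W*k 0 u^2*τ 0 u - R 0 u, fun s t => ?_⟩
  have c1 : ((dT k s t : ℝ) : ℂ) = ((W/2 * (3 * k s t^2 * dS k s t) + W * dS (dS (dS k)) s t
      - (dS k s t * τ s t + k s t * dS τ s t)
      - W * (dS k s t * τ s t^2 + k s t * (2 * τ s t * dS τ s t)) : ℝ) : ℂ)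
      - ((τ s t : ℝ) : ℂ) * ((dS k s t + 2*W*dS k s t*τ s t + W*k s t*dS τ s t : ℝ) : ℂ) := by
    have e := hkt s t
    rw [hGsdef, hHdef] at e
    exact_mod_cast e
  have c2 : ((k s t : ℝ) : ℂ) * ((θtf τ s t : ℝ) : ℂ) =
      ((k s t : ℝ) : ℂ) * ((R s t : ℝ) : ℂ)
      + ((dS (dS k) s t + 2*W*(dS (dS k) s t * τ s t + dS k s t * dS τ s t)
          + W*(dS k s t * dS τ s t + k s t * dS (dS τ) s t) : ℝ) : ℂ)
      + ((τ s t : ℝ) : ℂ) * ((W/2 * k s t^3 + W * dS (dS k) s t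
          - k s t * τ s t - W * k s t * τ s t^2 : ℝ) : ℂ) := by
    have e := hkθ s t
    rw [hGdef, hHsdef] at e
    exact_mod_cast e
  have c3 : ((R s t : ℝ) : ℂ) = ((k s t : ℝ) : ℂ)^2/2
      + (W : ℂ) * ((k s t : ℝ) : ℂ)^2 * ((τ s t : ℝ) : ℂ)
      - ((k 0 t^2/2 + W*k 0 t^2*τ 0 t - R 0 t : ℝ) : ℂ) := by
    have e : R s t = k s t^2/2 + W*k s t^2*τ s t
        - (k 0 t^2/2 + W*k 0 t^2*τ 0 t - R 0 t) := by linarith [hconst s t]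
    exact_mod_cast e
  rw [hψt s t, hψss s t, hψsss s t, hψs s t, habs s t,
    show ψf k τ s t = ((k s t : ℝ) : ℂ) * E s t from rfl]
  linear_combination (norm := (push_cast; ring1)) (Complex.I * E s t) * c1 + (Complex.I^2 * E s t) * c2
    + (Complex.I^2 * ((k s t : ℝ) : ℂ) * E s t) * c3
    + (E s t * (((dS (dS k) s t : ℝ) : ℂ)
        - ((k s t : ℝ) : ℂ) * ((τ s t : ℝ) : ℂ) * ((τ s t : ℝ) : ℂ)
        + ((k s t : ℝ) : ℂ)^3/2
        - ((k 0 t^2/2 + W*k 0 t^2*τ 0 t - R 0 t : ℝ) : ℂ) * ((k s t : ℝ) : ℂ))) * Complex.I_sq
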